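/- arXiv:2111.00623 — 2 statements merged into one kernel-verified Lean document; each statement's English description precedes it below -/
import Mathlib

section
/- Suppose S is a special symmetry group acting on X, and '<' is a relation that linearly orders the set of orbits X/∼ (trichotomy: for any two orbits A, B exactly one of A<B, B<A, A=B holds). Let m : X → ℝⁿ be a parity-even chiral measure with all components nonnegative (m = |m|). Define m_o(x) = m(x) if S(x) < S(P(x)) and m_o(x) = -m(x) otherwise. Then m_o is S-invariant. -/
open MulAction in
theorem orbit_apply_smul_eq_orbit_apply {X S : Type*} [Group S] [MulAction S X] {P : X → X}
    (hSpecial : ∀ s : S, ∃ s' : S, ∀ x, P (s • x) = s' • P x) (s : S) (x : X) :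
    orbit S (P (s • x)) = orbit S (P x) := by
  obtain ⟨s', hs'⟩ := hSpecial s
  rw [hs' x, orbit_smul]

open Classical in
theorem constructed_odd_measure_is_S_invariant_general
    {X : Type*} {S : Type*} [Group S] [MulAction S X] {n : ℕ}
    (P : X → X)
    (hSpecial : ∀ s : S, ∃ s' : S, ∀ x, P (s • x) = s' • P x)
    (lt : Set X → Set X → Prop)
    (m : X → Fin n → ℝ)
    (hInv : ∀ (s : S) (x : X), m (s • x) = m x)
    (mo : X → Fin n → ℝ)
    (hmo : ∀ x, mo x =
      if lt (MulAction.orbit S x) (MulAction.orbit S (P x)) then m x else -m x) :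
    ∀ (s : S) (x : X), mo (s • x) = mo x := by
  intro s x
  rw [hmo, hmo, MulAction.orbit_smul, orbit_apply_smul_eq_orbit_apply hSpecial, hInv]

open Classical in
theorem constructed_odd_measure_is_S_invariant
    {X : Type*} {S : Type*} [Group S] [MulAction S X] {n : ℕ}
    (P : X → X) (hP : ∀ x, P (P x) = x)
    (hSpecial : ∀ s : S, ∃ s' : S, ∀ x, P (s • x) = s' • P x)
    (lt : Set X → Set X → Prop)
    (hTrich : ∀ x y : X,
      (lt (MulAction.orbit S x) (MulAction.orbit S y) ∧
        ¬ lt (MulAction.orbit S y) (MulAction.orbit S x) ∧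
        MulAction.orbit S x ≠ MulAction.orbit S y) ∨
      (lt (MulAction.orbit S y) (MulAction.orbit S x) ∧
        ¬ lt (MulAction.orbit S x) (MulAction.orbit S y) ∧
        MulAction.orbit S x ≠ MulAction.orbit S y) ∨
      (MulAction.orbit S x = MulAction.orbit S y ∧
        ¬ lt (MulAction.orbit S x) (MulAction.orbit S y) ∧
        ¬ lt (MulAction.orbit S y) (MulAction.orbit S x)))
    (m : X → Fin n → ℝ)
    (hEven : ∀ x, m (P x) = m x)
    (hInv : ∀ (s : S) (x : X), m (s • x) = m x)
    (hAchiral : ∀ x, P x ∈ MulAction.orbit S x → m x = 0)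
    (hNonneg : ∀ x i, 0 ≤ m x i)
    (mo : X → Fin n → ℝ)
    (hmo : ∀ x, mo x =
      if lt (MulAction.orbit S x) (MulAction.orbit S (P x)) then m x else -m x) :
    ∀ (s : S) (x : X), mo (s • x) = mo x :=
  constructed_odd_measure_is_S_invariant_general P hSpecial lt m hInv mo hmo
end

section
/- The polynomial I(a₁,a₂,b₁,b₂) = -2 a₁ a₂ b₁ + a₁² b₂ - b₁² b₂ is invariant under the simultaneous rotation action (a₁,b₁) ↦ (a₁ cos δ - b₁ sin δ, a₁ sin δ + b₁ cos δ) and (a₂,b₂) ↦ (a₂ cos 2δ - b₂ sin 2δ, a₂ sin 2δ + b₂ cos 2δ), for all δ ∈ ℝ, and it is odd under the parity map (a₁,b₁,a₂,b₂) ↦ (a₁,-b₁,a₂,-b₂). -/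
/-!
With `z₁ = a₁ + i b₁` and `z₂ = a₂ + i b₂` the polynomial is `Im (conj z₁ ^ 2 * z₂)`.
Replacing `z₁, z₂` by `w z₁, w² z₂` multiplies `conj z₁ ^ 2 * z₂` by `|w| ^ 4`, which is `1` for
`w = e^{iδ}`; the parity map conjugates `z₁` and `z₂`, hence conjugates `conj z₁ ^ 2 * z₂` and
negates its imaginary part.
-/

section CommRing

variable {R : Type*} [CommRing R]

def cubicInvariant (a₁ b₁ a₂ b₂ : R) : R :=
  -2 * a₁ * a₂ * b₁ + a₁ ^ 2 * b₂ - b₁ ^ 2 * b₂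

theorem cubicInvariant_rotate (c s a₁ b₁ a₂ b₂ : R) :
    cubicInvariant (a₁ * c - b₁ * s) (a₁ * s + b₁ * c)
        (a₂ * (c ^ 2 - s ^ 2) - b₂ * (2 * s * c)) (a₂ * (2 * s * c) + b₂ * (c ^ 2 - s ^ 2)) =
      (c ^ 2 + s ^ 2) ^ 2 * cubicInvariant a₁ b₁ a₂ b₂ := by
  unfold cubicInvariant
  ring

theorem cubicInvariant_neg_neg (a₁ b₁ a₂ b₂ : R) :
    cubicInvariant a₁ (-b₁) a₂ (-b₂) = -cubicInvariant a₁ b₁ a₂ b₂ := by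
  unfold cubicInvariant
  ring

end CommRing

theorem cubicInvariant_rotate_angle (δ a₁ b₁ a₂ b₂ : ℝ) :
    cubicInvariant (a₁ * Real.cos δ - b₁ * Real.sin δ) (a₁ * Real.sin δ + b₁ * Real.cos δ)
        (a₂ * Real.cos (2 * δ) - b₂ * Real.sin (2 * δ))
        (a₂ * Real.sin (2 * δ) + b₂ * Real.cos (2 * δ)) =
      cubicInvariant a₁ b₁ a₂ b₂ := by
  rw [Real.cos_two_mul', Real.sin_two_mul, cubicInvariant_rotate, Real.cos_sq_add_sin_sq,
    one_pow, one_mul]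

theorem I121_rotation_invariant_and_parity_odd :
    (∀ δ a₁ b₁ a₂ b₂ : ℝ,
      (-2 * (a₁ * Real.cos δ - b₁ * Real.sin δ) * (a₂ * Real.cos (2*δ) - b₂ * Real.sin (2*δ))
          * (a₁ * Real.sin δ + b₁ * Real.cos δ)
        + (a₁ * Real.cos δ - b₁ * Real.sin δ)^2 * (a₂ * Real.sin (2*δ) + b₂ * Real.cos (2*δ))
        - (a₁ * Real.sin δ + b₁ * Real.cos δ)^2 * (a₂ * Real.sin (2*δ) + b₂ * Real.cos (2*δ)))
        = -2 * a₁ * a₂ * b₁ + a₁^2 * b₂ - b₁^2 * b₂) ∧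
    (∀ a₁ b₁ a₂ b₂ : ℝ,
      (-2 * a₁ * a₂ * (-b₁) + a₁^2 * (-b₂) - (-b₁)^2 * (-b₂))
        = -(-2 * a₁ * a₂ * b₁ + a₁^2 * b₂ - b₁^2 * b₂)) :=
  ⟨cubicInvariant_rotate_angle, cubicInvariant_neg_neg⟩
end
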